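/- arXiv:1907.01398 — 2 statements merged into one kernel-verified Lean document; each statement's English description precedes it below -/
import Mathlib

section
/- Let Ψ be a root system with base Δ in a real inner product space V, and let v ∈ V satisfy (α, v) ≥ 0 for all α ∈ Δ. Set Ψ^v = {α ∈ Ψ : (α, v) = 0}. Then Ψ^v is a sub-root system of Ψ and Ψ^v ∩ Δ is a base of simple roots for Ψ^v. -/
open RealInnerProductSpace

variable {V : Type*} [NormedAddCommGroup V] [InnerProductSpace ℝ V] [FiniteDimensional ℝ V]

/-- The reflection in the hyperplane orthogonal to `α`. -/
noncomputable def sRefl (α : V) : V ≃ₗᵢ[ℝ] V := Submodule.reflection (ℝ ∙ α)ᗮ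

/-- A reduced crystallographic root system in a real inner product space. -/
structure IsRootSystem (Ψ : Set V) : Prop where
  finite : Ψ.Finite
  ne_zero : ∀ α ∈ Ψ, α ≠ 0
  neg_mem : ∀ α ∈ Ψ, -α ∈ Ψ
  reduced : ∀ α ∈ Ψ, ∀ t : ℝ, t • α ∈ Ψ → t = 1 ∨ t = -1
  refl_mem : ∀ α ∈ Ψ, ∀ β ∈ Ψ, sRefl α β ∈ Ψ
  crystallographic : ∀ α ∈ Ψ, ∀ β ∈ Ψ, ∃ n : ℤ, 2 * ⟪β, α⟫ / ⟪α, α⟫ = (n : ℝ)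

/-- `P` is a system of positive roots for `Ψ`. -/
structure IsPositiveSystem (Ψ P : Set V) : Prop where
  subset : P ⊆ Ψ
  mem_or_neg_mem : ∀ α ∈ Ψ, α ∈ P ∨ -α ∈ P
  not_neg_mem : ∀ α ∈ P, -α ∉ P
  add_mem : ∀ α ∈ P, ∀ β ∈ P, α + β ∈ Ψ → α + β ∈ P

/-- `Pi` is a sub-root system of `Ψ`: closed under negation and under addition of roots. -/
def IsSubRootSystem (Ψ Pi : Set V) : Prop :=
  Pi ⊆ Ψ ∧ (∀ α ∈ Pi, -α ∈ Pi) ∧ ∀ α ∈ Pi, ∀ β ∈ Pi, α + β ∈ Ψ → α + β ∈ Pi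

/-- `Δ` is a base (system of simple roots) of `Ψ`. -/
structure IsBase (Ψ : Set V) (Δ : Finset V) : Prop where
  subset : ↑Δ ⊆ Ψ
  indep : LinearIndependent ℝ (fun α : Δ => (α : V))
  decomp : ∀ β ∈ Ψ, ∃ c : V → ℤ, β = ∑ α ∈ Δ, (c α : ℝ) • α ∧
    ((∀ α ∈ Δ, 0 ≤ c α) ∨ (∀ α ∈ Δ, c α ≤ 0))

/-- The Weyl group of `Ψ`: the subgroup of linear isometries generated by root reflections. -/
noncomputable def weylGroup (Ψ : Set V) : Subgroup (V ≃ₗᵢ[ℝ] V) :=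
  Subgroup.closure {g | ∃ α ∈ Ψ, g = sRefl α}

/-- `w` commutes with `θ` as a map on `V`. -/
def commutesWith (θ w : V ≃ₗᵢ[ℝ] V) : Prop := ∀ x : V, θ (w x) = w (θ x)

/-!
A root `β` with `⟪β, v⟫ = 0` is an integer combination `∑ c α • α` of simple roots with
coefficients of one sign. Pairing with `v` gives `∑ c α ⟪α, v⟫ = 0`, a sum of terms of one sign,
so `c α = 0` whenever `⟪α, v⟫ > 0`: only the simple roots orthogonal to `v` occur.
-/

section

omit [FiniteDimensional ℝ V]

lemma isSubRootSystem_setOf_inner_eq_zero {Ψ : Set V} (hneg : ∀ α ∈ Ψ, -α ∈ Ψ) (v : V) :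
    IsSubRootSystem Ψ {α ∈ Ψ | ⟪α, v⟫ = 0} :=
  ⟨fun _ hα => hα.1,
    fun α hα => ⟨hneg α hα.1, by rw [inner_neg_left, hα.2, neg_zero]⟩,
    fun _ hα _ hβ hsum => ⟨hsum, by rw [inner_add_left, hα.2, hβ.2, add_zero]⟩⟩

lemma eq_zero_of_inner_sum_smul_eq_zero_of_nonneg {s : Finset V} {c : V → ℝ} {v : V}
    (hc : ∀ α ∈ s, 0 ≤ c α) (hv : ∀ α ∈ s, 0 ≤ ⟪α, v⟫) (h : ⟪∑ α ∈ s, c α • α, v⟫ = 0)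
    {α : V} (hα : α ∈ s) (hαv : ⟪α, v⟫ ≠ 0) : c α = 0 := by
  simp only [sum_inner, real_inner_smul_left] at h
  have hterm := (Finset.sum_eq_zero_iff_of_nonneg fun β hβ => mul_nonneg (hc β hβ) (hv β hβ)).1 h
  exact (mul_eq_zero.1 (hterm α hα)).resolve_right hαv

lemma eq_zero_of_inner_sum_smul_eq_zero {s : Finset V} {c : V → ℤ} {v : V}
    (hc : (∀ α ∈ s, 0 ≤ c α) ∨ (∀ α ∈ s, c α ≤ 0)) (hv : ∀ α ∈ s, 0 ≤ ⟪α, v⟫)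
    (h : ⟪∑ α ∈ s, (c α : ℝ) • α, v⟫ = 0) {α : V} (hα : α ∈ s) (hαv : ⟪α, v⟫ ≠ 0) :
    c α = 0 := by
  rcases hc with hc | hc
  · exact_mod_cast eq_zero_of_inner_sum_smul_eq_zero_of_nonneg
      (c := fun α => (c α : ℝ)) (fun β hβ => by exact_mod_cast hc β hβ) hv h hα hαv
  · have hneg : ⟪∑ β ∈ s, (-(c β : ℝ)) • β, v⟫ = 0 := by
      simp only [neg_smul, Finset.sum_neg_distrib, inner_neg_left, h, neg_zero]
    have := eq_zero_of_inner_sum_smul_eq_zero_of_nonneg (c := fun β => -(c β : ℝ))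
      (fun β hβ => neg_nonneg.2 (by exact_mod_cast hc β hβ)) hv hneg hα hαv
    exact_mod_cast neg_eq_zero.1 this

open scoped Classical in
lemma IsBase.filter_inner_eq_zero {Ψ : Set V} {Δ : Finset V} (hΔ : IsBase Ψ Δ) {v : V}
    (hv : ∀ α ∈ Δ, 0 ≤ ⟪α, v⟫) :
    IsBase {α ∈ Ψ | ⟪α, v⟫ = 0} (Δ.filter fun α => ⟪α, v⟫ = 0) where
  subset α hα := by
    rw [Finset.coe_filter] at hα
    exact ⟨hΔ.subset hα.1, hα.2⟩
  indep := LinearIndepOn.mono (v := id) hΔ.indep (Finset.coe_subset.2 (Finset.filter_subset _ _))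
  decomp β hβ := by
    obtain ⟨c, hβc, hsign⟩ := hΔ.decomp β hβ.1
    have hsupp : ∀ α ∈ Δ, ⟪α, v⟫ ≠ 0 → c α = 0 :=
      fun α hα => eq_zero_of_inner_sum_smul_eq_zero hsign hv (hβc ▸ hβ.2) hα
    refine ⟨c, ?_, ?_⟩
    · rw [hβc, Finset.sum_filter_of_ne]
      intro α hα hne
      by_contra hαv
      rw [hsupp α hα hαv, Int.cast_zero, zero_smul] at hne
      exact hne rfl
    · exact hsign.imp (fun h α hα => h α (Finset.mem_filter.1 hα).1)
        (fun h α hα => h α (Finset.mem_filter.1 hα).1)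

end

open scoped Classical in
/-- If `(α,v) ≥ 0` for all simple roots `α`, then `Ψ^v = {α ∈ Ψ : (α,v) = 0}` is a
sub-root system of `Ψ` and `Ψ^v ∩ Δ` is a base of simple roots for `Ψ^v`. -/
theorem stmt3 (Ψ : Set V) (hΨ : IsRootSystem Ψ) (Δ : Finset V) (hΔ : IsBase Ψ Δ)
    (v : V) (hv : ∀ α ∈ Δ, 0 ≤ ⟪α, v⟫) :
    IsSubRootSystem Ψ {α ∈ Ψ | ⟪α, v⟫ = 0} ∧
      IsBase {α ∈ Ψ | ⟪α, v⟫ = 0} (Δ.filter fun α => ⟪α, v⟫ = 0) := by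
  exact ⟨isSubRootSystem_setOf_inner_eq_zero hΨ.neg_mem v, hΔ.filter_inner_eq_zero hv⟩
end

section
/- Let θ be an involutive isometry of a Euclidean space preserving a root system Φ, and let W^re (resp. W^im) be the Weyl group of the subsystem of roots with θ(α) = −α (resp. θ(α) = α). Then W^re and W^im are normal subgroups of W(Φ)^θ, and every element of W^re fixes every imaginary root pointwise, while every element of W^im fixes every real root pointwise; in particular W^re and W^im commute elementwise and W^re W^im = W^re × W^im inside W(Φ)^θ. -/
open RealInnerProductSpace

variable {V : Type*} [NormedAddCommGroup V] [InnerProductSpace ℝ V] [FiniteDimensional ℝ V]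

/-!
Every claim is checked on the generating reflections `s_α`, using `w s_α w⁻¹ = s_{w α}`. For `θ`
this gives `s_{±α} = s_α` when `α` is real or imaginary, so `W^re` and `W^im` commute with `θ`;
an element of `W(Φ)^θ` maps real roots to real roots and imaginary ones to imaginary ones, which
gives normality. Real and imaginary roots are orthogonal, since
`⟪α, β⟫ = ⟪θ α, θ β⟫ = -⟪α, β⟫`, so each of `W^re`, `W^im` fixes the roots of the other kind, and an
isometry fixing `α` commutes with `s_α`. Finally an element of `W^re ∩ W^im` fixes the span of the
real roots (as an element of `W^im`) and its orthogonal complement (as an element of `W^re`).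
-/

open Pointwise

variable {E : Type*} [NormedAddCommGroup E] [InnerProductSpace ℝ E]

instance LinearIsometryEquiv.applyMulAction : MulAction (E ≃ₗᵢ[ℝ] E) E where
  smul f x := f x
  one_smul _ := rfl
  mul_smul _ _ _ := rfl

lemma sRefl_apply (α v : E) : sRefl α v = v - (2 * (⟪α, v⟫ / ‖α‖ ^ 2)) • α := by
  rw [sRefl, Submodule.reflection_orthogonal_apply, Submodule.reflection_singleton_apply, neg_sub,
    two_nsmul, ← two_smul ℝ, smul_smul]
  norm_num

@[simp]
lemma sRefl_sRefl (α v : E) : sRefl α (sRefl α v) = v :=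
  Submodule.reflection_reflection _ v

lemma map_sRefl (f : E ≃ₗᵢ[ℝ] E) (α v : E) : f (sRefl α v) = sRefl (f α) (f v) := by
  rw [sRefl_apply, sRefl_apply, map_sub, map_smul, f.inner_map_map, f.norm_map]

@[simp]
lemma sRefl_neg (α : E) : sRefl (-α) = sRefl α := by
  ext v
  simp [sRefl_apply, neg_div, mul_neg]

lemma sRefl_apply_of_inner_eq_zero {α v : E} (h : ⟪α, v⟫ = 0) : sRefl α v = v := by
  simp [sRefl_apply, h]

lemma conj_sRefl (w : E ≃ₗᵢ[ℝ] E) (α : E) : w * sRefl α * w⁻¹ = sRefl (w α) := by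
  ext x
  simp [map_sRefl w α]

lemma image_sRefl_eq {Ψ : Set E} {α : E} (h : ∀ β ∈ Ψ, sRefl α β ∈ Ψ) : ⇑(sRefl α) '' Ψ = Ψ :=
  (Set.image_subset_iff.mpr h).antisymm fun β hβ => ⟨sRefl α β, h β hβ, sRefl_sRefl α β⟩

lemma inner_eq_zero_of_apply_eq_neg_of_apply_eq (θ : E ≃ₗᵢ[ℝ] E) {α β : E} (hα : θ α = -α)
    (hβ : θ β = β) : ⟪α, β⟫ = 0 := by
  have h := θ.inner_map_map α β
  rw [hα, hβ, inner_neg_left] at h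
  linarith

lemma commutesWith_iff_mem_centralizer {θ w : E ≃ₗᵢ[ℝ] E} :
    commutesWith θ w ↔ w ∈ Subgroup.centralizer {θ} := by
  rw [Subgroup.mem_centralizer_singleton_iff, commutesWith, LinearIsometryEquiv.ext_iff]
  exact forall_congr' fun _ => eq_comm

lemma LinearIsometryEquiv.eq_one_of_fixes_of_fixes_orthogonal {u : E ≃ₗᵢ[ℝ] E}
    (K : Submodule ℝ E) [K.HasOrthogonalProjection] (hK : ∀ x ∈ K, u x = x)
    (hKperp : ∀ x ∈ Kᗮ, u x = x) : u = 1 := by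
  ext x
  obtain ⟨y, hy, z, hz, rfl⟩ := K.exists_add_mem_mem_orthogonal x
  simp [hK y hy, hKperp z hz]

section WeylGroup

variable {Ψ Ψ' : Set E}

lemma weylGroup_mono (h : Ψ ⊆ Ψ') : weylGroup Ψ ≤ weylGroup Ψ' :=
  Subgroup.closure_mono fun _ ⟨α, hα, hg⟩ => ⟨α, h hα, hg⟩

lemma weylGroup_le_iff {H : Subgroup (E ≃ₗᵢ[ℝ] E)} : weylGroup Ψ ≤ H ↔ ∀ α ∈ Ψ, sRefl α ∈ H := by
  rw [weylGroup, Subgroup.closure_le]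
  exact ⟨fun h α hα => h ⟨α, hα, rfl⟩, fun h _ ⟨α, hα, hg⟩ => hg ▸ h α hα⟩

lemma weylGroup_le_stabilizer (h : ∀ α ∈ Ψ, ∀ β ∈ Ψ, sRefl α β ∈ Ψ) :
    weylGroup Ψ ≤ MulAction.stabilizer (E ≃ₗᵢ[ℝ] E) Ψ :=
  weylGroup_le_iff.mpr fun α hα => image_sRefl_eq (h α hα)

lemma weylGroup_le_stabilizer_of_inner_eq_zero {β : E} (h : ∀ α ∈ Ψ, ⟪α, β⟫ = 0) :
    weylGroup Ψ ≤ MulAction.stabilizer (E ≃ₗᵢ[ℝ] E) β :=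
  weylGroup_le_iff.mpr fun α hα => sRefl_apply_of_inner_eq_zero (h α hα)

lemma weylGroup_le_centralizer {S : Set (E ≃ₗᵢ[ℝ] E)}
    (h : ∀ v ∈ S, ∀ α ∈ Ψ, v α = α ∨ v α = -α) : weylGroup Ψ ≤ Subgroup.centralizer S := by
  refine weylGroup_le_iff.mpr fun α hα => Subgroup.mem_centralizer_iff.mpr fun v hv => ?_
  have hconj : v * sRefl α * v⁻¹ = sRefl α := by
    rcases h v hv α hα with h' | h' <;> simp [conj_sRefl, h']
  nth_rewrite 2 [← hconj]
  group

lemma map_conj_weylGroup (w : E ≃ₗᵢ[ℝ] E) :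
    (weylGroup Ψ).map (MulAut.conj w).toMonoidHom = weylGroup (w '' Ψ) := by
  rw [weylGroup, MonoidHom.map_closure, weylGroup]
  congr 1
  ext g
  simp [conj_sRefl, eq_comm]

lemma conj_mem_weylGroup {w u : E ≃ₗᵢ[ℝ] E} (hw : ∀ α ∈ Ψ, w α ∈ Ψ') (hu : u ∈ weylGroup Ψ) :
    w * u * w⁻¹ ∈ weylGroup Ψ' := by
  have : w * u * w⁻¹ ∈ weylGroup (w '' Ψ) := map_conj_weylGroup w ▸ ⟨u, hu, rfl⟩
  exact weylGroup_mono (Set.image_subset_iff.mpr hw) this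

lemma weylGroup_apply_of_mem_orthogonal {u : E ≃ₗᵢ[ℝ] E} (hu : u ∈ weylGroup Ψ) {x : E}
    (hx : x ∈ (Submodule.span ℝ Ψ)ᗮ) : u x = x :=
  weylGroup_le_stabilizer_of_inner_eq_zero
    (fun α hα => (Submodule.mem_orthogonal _ x).mp hx α (Submodule.subset_span hα)) hu

lemma apply_mem_of_mem_weylGroup (h : ∀ α ∈ Ψ, ∀ β ∈ Ψ, sRefl α β ∈ Ψ) {w : E ≃ₗᵢ[ℝ] E}
    (hw : w ∈ weylGroup Ψ) {β : E} (hβ : β ∈ Ψ) : w β ∈ Ψ :=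
  weylGroup_le_stabilizer h hw ▸ Set.mem_image_of_mem w hβ

lemma commutesWith_of_mem_weylGroup {θ u : E ≃ₗᵢ[ℝ] E} (h : ∀ α ∈ Ψ, θ α = α ∨ θ α = -α)
    (hu : u ∈ weylGroup Ψ) : commutesWith θ u :=
  commutesWith_iff_mem_centralizer.mpr <|
    weylGroup_le_centralizer (fun _ hv => Set.mem_singleton_iff.mp hv ▸ h) hu

lemma eq_one_of_mem_weylGroup_of_forall_apply_eq [(Submodule.span ℝ Ψ).HasOrthogonalProjection]
    {u : E ≃ₗᵢ[ℝ] E} (hu : u ∈ weylGroup Ψ) (hfix : ∀ α ∈ Ψ, u α = α) : u = 1 := by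
  refine u.eq_one_of_fixes_of_fixes_orthogonal (Submodule.span ℝ Ψ) (fun x hx => ?_)
    fun x hx => weylGroup_apply_of_mem_orthogonal hu hx
  have hspan : Submodule.span ℝ Ψ ≤ LinearMap.eqLocus u.toLinearMap LinearMap.id :=
    Submodule.span_le.mpr hfix
  exact hspan hx

end WeylGroup

theorem stmt9_general (Φ : Set V) (hΦ : IsRootSystem Φ) (θ : V ≃ₗᵢ[ℝ] V) :
    (∀ u ∈ weylGroup {α ∈ Φ | θ α = -α}, u ∈ weylGroup Φ ∧ commutesWith θ u) ∧
    (∀ u ∈ weylGroup {α ∈ Φ | θ α = α}, u ∈ weylGroup Φ ∧ commutesWith θ u) ∧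
    (∀ w ∈ weylGroup Φ, commutesWith θ w →
      ∀ u ∈ weylGroup {α ∈ Φ | θ α = -α}, w * u * w⁻¹ ∈ weylGroup {α ∈ Φ | θ α = -α}) ∧
    (∀ w ∈ weylGroup Φ, commutesWith θ w →
      ∀ u ∈ weylGroup {α ∈ Φ | θ α = α}, w * u * w⁻¹ ∈ weylGroup {α ∈ Φ | θ α = α}) ∧
    (∀ u ∈ weylGroup {α ∈ Φ | θ α = -α}, ∀ β ∈ Φ, θ β = β → u β = β) ∧
    (∀ u ∈ weylGroup {α ∈ Φ | θ α = α}, ∀ β ∈ Φ, θ β = -β → u β = β) ∧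
    (∀ u ∈ weylGroup {α ∈ Φ | θ α = -α}, ∀ v ∈ weylGroup {α ∈ Φ | θ α = α},
      u * v = v * u) ∧
    weylGroup {α ∈ Φ | θ α = -α} ⊓ weylGroup {α ∈ Φ | θ α = α} = ⊥ := by
  have hfix_re : ∀ u ∈ weylGroup {α ∈ Φ | θ α = -α}, ∀ β ∈ Φ, θ β = β → u β = β :=
    fun _ hu _ _ hβ => weylGroup_le_stabilizer_of_inner_eq_zero
      (fun _ hα => inner_eq_zero_of_apply_eq_neg_of_apply_eq θ hα.2 hβ) hu
  have hfix_im : ∀ u ∈ weylGroup {α ∈ Φ | θ α = α}, ∀ β ∈ Φ, θ β = -β → u β = β :=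
    fun _ hu _ _ hβ => weylGroup_le_stabilizer_of_inner_eq_zero
      (fun _ hα => by
        rw [real_inner_comm]; exact inner_eq_zero_of_apply_eq_neg_of_apply_eq θ hβ hα.2) hu
  refine ⟨fun u hu => ⟨weylGroup_mono (Set.sep_subset _ _) hu,
      commutesWith_of_mem_weylGroup (fun _ hα => .inr hα.2) hu⟩,
    fun u hu => ⟨weylGroup_mono (Set.sep_subset _ _) hu,
      commutesWith_of_mem_weylGroup (fun _ hα => .inl hα.2) hu⟩,
    fun w hw hθw _ => conj_mem_weylGroup fun α hα =>
      ⟨apply_mem_of_mem_weylGroup hΦ.refl_mem hw hα.1, by rw [hθw, hα.2, map_neg]⟩,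
    fun w hw hθw _ => conj_mem_weylGroup fun α hα =>
      ⟨apply_mem_of_mem_weylGroup hΦ.refl_mem hw hα.1, by rw [hθw, hα.2]⟩,
    hfix_re, hfix_im, fun u hu v hv => ?_, ?_⟩
  · have hcent := weylGroup_le_centralizer (S := weylGroup {α ∈ Φ | θ α = α})
      (fun v hv α hα => .inl (hfix_im v hv α hα.1 hα.2)) hu
    exact (Subgroup.mem_centralizer_iff.mp hcent v hv).symm
  · refine eq_bot_iff.mpr fun u ⟨hre, him⟩ => Subgroup.mem_bot.mpr ?_
    exact eq_one_of_mem_weylGroup_of_forall_apply_eq hre fun α hα => hfix_im u him α hα.1 hα.2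

/-- `W^re` and `W^im` are normal subgroups of `W(Φ)^θ`; `W^re` fixes all imaginary roots
and `W^im` fixes all real roots; hence they commute elementwise and intersect trivially. -/
theorem stmt9 (Φ : Set V) (hΦ : IsRootSystem Φ) (θ : V ≃ₗᵢ[ℝ] V)
    (hinv : ∀ x, θ (θ x) = x) (hΦθ : ⇑θ '' Φ = Φ) :
    (∀ u ∈ weylGroup {α ∈ Φ | θ α = -α}, u ∈ weylGroup Φ ∧ commutesWith θ u) ∧
    (∀ u ∈ weylGroup {α ∈ Φ | θ α = α}, u ∈ weylGroup Φ ∧ commutesWith θ u) ∧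
    (∀ w ∈ weylGroup Φ, commutesWith θ w →
      ∀ u ∈ weylGroup {α ∈ Φ | θ α = -α}, w * u * w⁻¹ ∈ weylGroup {α ∈ Φ | θ α = -α}) ∧
    (∀ w ∈ weylGroup Φ, commutesWith θ w →
      ∀ u ∈ weylGroup {α ∈ Φ | θ α = α}, w * u * w⁻¹ ∈ weylGroup {α ∈ Φ | θ α = α}) ∧
    (∀ u ∈ weylGroup {α ∈ Φ | θ α = -α}, ∀ β ∈ Φ, θ β = β → u β = β) ∧
    (∀ u ∈ weylGroup {α ∈ Φ | θ α = α}, ∀ β ∈ Φ, θ β = -β → u β = β) ∧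
    (∀ u ∈ weylGroup {α ∈ Φ | θ α = -α}, ∀ v ∈ weylGroup {α ∈ Φ | θ α = α},
      u * v = v * u) ∧
    weylGroup {α ∈ Φ | θ α = -α} ⊓ weylGroup {α ∈ Φ | θ α = α} = ⊥ :=
  stmt9_general Φ hΦ θ
end
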